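/- Let d, n ≥ 1, Ω ⊆ ℝ^d measurable, h, σ, s_a > 0, and 0 < c₁ ≤ C₁, 0 < c₂ ≤ C₂, 0 < c₃ ≤ C₃. Let φ₁,…,φ_n ∈ L²(Ω) with c₁ h^d ≤ ‖φᵢ‖²_{L²(Ω)} ≤ C₁ h^d for all i, and c₂ ≤ n h^d ≤ C₂. Let F be a nonempty set of functions f ∈ L²(Ω), each equipped with a coefficient vector c(f) ∈ ℝⁿ, such that ‖ Σᵢ c(f)ᵢ φᵢ − f ‖_{L²(Ω)} ≤ C₃ h^{s_a} for every f ∈ F, and such that some f₀ ∈ F satisfies ‖ Σᵢ c(f₀)ᵢ φᵢ − f₀ ‖_{L²(Ω)} ≥ c₃ h^{s_a}. Let ξ₁,…,ξ_n be independent square-integrable real random variables with E[ξᵢ] = 0 and E[ξᵢ²] = 1. Then there exist constants 0 < κ ≤ K depending only on c₁, c₂, c₃, C₁, C₂, C₃ (not on h, σ, n) such that κ (σ + h^{s_a}) ≤ sup_{f ∈ F} ( E[ ‖ Σᵢ (c(f)ᵢ + σ ξᵢ) φᵢ − f ‖²_{L²(Ω)} ] )^{1/2} ≤ K (σ + h^{s_a}).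 -/

import Mathlib

/-!
In `L²(Ω)` the noisy residual is `b_f + ∑ᵢ ξᵢ (σ φᵢ)` with the bias `b_f = ∑ᵢ c(f)ᵢ φᵢ − f`.
The `ξᵢ` are centred and orthonormal in `L²(μ)`, so the expected squared error is exactly
`‖b_f‖² + σ² S` with `S = ∑ᵢ ‖φᵢ‖² ∼ n h^d ∼ 1`. Since `√(B² + σ² S)` lies between
`(B + σ √S) / 2` and `B + σ √S`, and the bias is at most `C₃ h^{s_a}` on `F` and at least
`c₃ h^{s_a}` at `f₀`, both bounds follow.
-/

open MeasureTheory ProbabilityTheory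
open scoped RealInnerProductSpace

section RandomSum

variable {Ω : Type*} [MeasurableSpace Ω] {μ : Measure Ω} {ι : Type*} {ξ : ι → Ω → ℝ}

lemma integral_mul_eq_ite_of_iIndepFun [DecidableEq ι]
    (hξ : ∀ i, AEStronglyMeasurable (ξ i) μ) (hindep : iIndepFun ξ μ)
    (hmean : ∀ i, ∫ ω, ξ i ω ∂μ = 0) (hvar : ∀ i, ∫ ω, ξ i ω ^ 2 ∂μ = 1) (i j : ι) :
    ∫ ω, ξ i ω * ξ j ω ∂μ = if i = j then 1 else 0 := by
  split_ifs with hij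
  · subst hij
    simpa only [sq] using hvar i
  · rw [(hindep.indepFun hij).integral_fun_mul_eq_mul_integral (hξ i) (hξ j), hmean i, zero_mul]

variable {V : Type*} [NormedAddCommGroup V] [InnerProductSpace ℝ V] [Fintype ι]

lemma norm_add_sum_smul_sq (b : V) (Φ : ι → V) (a : ι → ℝ) :
    ‖b + ∑ i, a i • Φ i‖ ^ 2
      = ‖b‖ ^ 2 + 2 * ∑ i, a i * ⟪b, Φ i⟫ + ∑ i, ∑ j, a i * a j * ⟪Φ i, Φ j⟫ := by
  rw [norm_add_sq_real, ← real_inner_self_eq_norm_sq (∑ i, a i • Φ i), inner_sum, sum_inner]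
  simp only [real_inner_smul_left, real_inner_smul_right, inner_sum, Finset.mul_sum, mul_assoc,
    mul_left_comm]

lemma integral_norm_add_sum_smul_sq [IsProbabilityMeasure μ] (b : V) (Φ : ι → V)
    (hξ : ∀ i, MemLp (ξ i) 2 μ) (hindep : iIndepFun ξ μ)
    (hmean : ∀ i, ∫ ω, ξ i ω ∂μ = 0) (hvar : ∀ i, ∫ ω, ξ i ω ^ 2 ∂μ = 1) :
    ∫ ω, ‖b + ∑ i, ξ i ω • Φ i‖ ^ 2 ∂μ = ‖b‖ ^ 2 + ∑ i, ‖Φ i‖ ^ 2 := by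
  classical
  have hint : ∀ i, Integrable (ξ i) μ := fun i => (hξ i).integrable one_le_two
  have hmul : ∀ i j, Integrable (fun ω => ξ i ω * ξ j ω) μ := fun i j =>
    (hξ i).integrable_mul (hξ j)
  have hlin : Integrable (fun ω => 2 * ∑ i, ξ i ω * ⟪b, Φ i⟫) μ :=
    (integrable_finsetSum _ fun i _ => (hint i).mul_const _).const_mul _
  have hquad : Integrable (fun ω => ∑ i, ∑ j, ξ i ω * ξ j ω * ⟪Φ i, Φ j⟫) μ :=
    integrable_finsetSum _ fun i _ => integrable_finsetSum _ fun j _ => (hmul i j).mul_const _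
  have hconst_lin : Integrable (fun ω => ‖b‖ ^ 2 + 2 * ∑ i, ξ i ω * ⟪b, Φ i⟫) μ :=
    (integrable_const _).add hlin
  simp_rw [norm_add_sum_smul_sq]
  rw [integral_add hconst_lin hquad, integral_add (integrable_const _) hlin,
    integral_const_mul, integral_finsetSum _ fun i _ => (hint i).mul_const _,
    integral_finsetSum _ fun i _ => integrable_finsetSum _ fun j _ => (hmul i j).mul_const _]
  simp_rw [integral_finsetSum _ fun j _ => (hmul _ j).mul_const _, integral_mul_const,
    integral_mul_eq_ite_of_iIndepFun (fun i => (hξ i).1) hindep hmean hvar, hmean]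
  simp

end RandomSum

section Residual

variable {α : Type*} [MeasurableSpace α] {ν : Measure α} {ι : Type*} {φ : ι → α → ℝ}

lemma coeFn_sum_smul_toLp {p : ENNReal} [Fact (1 ≤ p)] (hφ : ∀ i, MemLp (φ i) p ν)
    (s : Finset ι) (a : ι → ℝ) :
    ⇑(∑ i ∈ s, a i • (hφ i).toLp (φ i)) =ᵐ[ν] fun x => ∑ i ∈ s, a i * φ i x := by
  classical
  induction s using Finset.induction_on with
  | empty => simp only [Finset.sum_empty]; exact Lp.coeFn_zero ℝ p ν
  | insert i s hi ih =>
    simp only [Finset.sum_insert hi]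
    filter_upwards [Lp.coeFn_add (a i • (hφ i).toLp (φ i)) (∑ j ∈ s, a j • (hφ j).toLp (φ j)),
      Lp.coeFn_smul (a i) ((hφ i).toLp (φ i)), (hφ i).coeFn_toLp, ih] with x h_add h_smul h_i h_s
    simp only [h_add, Pi.add_apply, h_smul, Pi.smul_apply, h_i, h_s, smul_eq_mul]

variable [Fintype ι]

lemma toReal_eLpNorm_sum_mul_sub_eq_norm {p : ENNReal} [Fact (1 ≤ p)] {f : α → ℝ}
    (hφ : ∀ i, MemLp (φ i) p ν) (hf : MemLp f p ν) (a : ι → ℝ) :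
    (eLpNorm (fun x => ∑ i, a i * φ i x - f x) p ν).toReal
      = ‖∑ i, a i • (hφ i).toLp (φ i) - hf.toLp f‖ := by
  rw [Lp.norm_def]
  refine congrArg ENNReal.toReal (eLpNorm_congr_ae ?_)
  filter_upwards [Lp.coeFn_sub (∑ i, a i • (hφ i).toLp (φ i)) (hf.toLp f),
    coeFn_sum_smul_toLp hφ Finset.univ a, hf.coeFn_toLp] with x h_sub h_sum h_f
  rw [h_sub, Pi.sub_apply, h_sum, h_f]

lemma integral_sq_toReal_eLpNorm_sum_add_noise_mul_sub
    {Ω : Type*} [MeasurableSpace Ω] {μ : Measure Ω} [IsProbabilityMeasure μ] {ξ : ι → Ω → ℝ}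
    {f : α → ℝ} (hφ : ∀ i, MemLp (φ i) 2 ν) (hf : MemLp f 2 ν) (a : ι → ℝ) (σ : ℝ)
    (hξ : ∀ i, MemLp (ξ i) 2 μ) (hindep : iIndepFun ξ μ)
    (hmean : ∀ i, ∫ ω, ξ i ω ∂μ = 0) (hvar : ∀ i, ∫ ω, ξ i ω ^ 2 ∂μ = 1) :
    ∫ ω, (eLpNorm (fun x => ∑ i, (a i + σ * ξ i ω) * φ i x - f x) 2 ν).toReal ^ 2 ∂μ
      = (eLpNorm (fun x => ∑ i, a i * φ i x - f x) 2 ν).toReal ^ 2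
        + σ ^ 2 * ∑ i, (eLpNorm (φ i) 2 ν).toReal ^ 2 := by
  set Φ := fun i => (hφ i).toLp (φ i)
  have hnoisy : ∀ ω, (eLpNorm (fun x => ∑ i, (a i + σ * ξ i ω) * φ i x - f x) 2 ν).toReal
      = ‖(∑ i, a i • Φ i - hf.toLp f) + ∑ i, ξ i ω • σ • Φ i‖ := by
    intro ω
    rw [toReal_eLpNorm_sum_mul_sub_eq_norm hφ hf]
    congr 1
    simp only [add_smul, Finset.sum_add_distrib, mul_smul, smul_comm σ]
    abel
  simp_rw [hnoisy, toReal_eLpNorm_sum_mul_sub_eq_norm hφ hf,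
    integral_norm_add_sum_smul_sq _ _ hξ hindep hmean hvar, norm_smul, mul_pow, Real.norm_eq_abs,
    sq_abs, ← Finset.mul_sum, ← Lp.norm_toLp (φ _) (hφ _)]
  rfl

end Residual

section Scalar

lemma sqrt_sq_add_sq_le_add {a b : ℝ} (ha : 0 ≤ a) (hb : 0 ≤ b) : √(a ^ 2 + b ^ 2) ≤ a + b :=
  Real.sqrt_le_iff.mpr ⟨by positivity, by nlinarith⟩

lemma add_le_two_mul_sqrt_sq_add_sq (a b : ℝ) : a + b ≤ 2 * √(a ^ 2 + b ^ 2) := by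
  have h := Real.abs_le_sqrt (x := (a + b) / 2) (y := a ^ 2 + b ^ 2)
    (by nlinarith [sq_nonneg (a - b)])
  linarith [le_abs_self ((a + b) / 2)]

lemma min_mul_add_le {a b x y : ℝ} (hx : 0 ≤ x) (hy : 0 ≤ y) :
    min a b * (x + y) ≤ b * x + a * y := by
  nlinarith [min_le_left a b, min_le_right a b]

lemma mul_add_le_max_mul {a b x y : ℝ} (hx : 0 ≤ x) (hy : 0 ≤ y) :
    b * x + a * y ≤ max a b * (x + y) := by
  nlinarith [le_max_left a b, le_max_right a b]

lemma sum_le_card_mul_of_le {ι : Type*} [Fintype ι] {x : ι → ℝ} {a u b : ℝ} (ha : 0 ≤ a)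
    (hx : ∀ i, x i ≤ a * u) (hu : Fintype.card ι * u ≤ b) : ∑ i, x i ≤ a * b := by
  calc ∑ i, x i ≤ Fintype.card ι * (a * u) := by
        simpa using Finset.sum_le_card_nsmul Finset.univ x (a * u) fun i _ => hx i
    _ = a * (Fintype.card ι * u) := by ring
    _ ≤ a * b := mul_le_mul_of_nonneg_left hu ha

lemma mul_le_sum_of_le {ι : Type*} [Fintype ι] {x : ι → ℝ} {a u b : ℝ} (ha : 0 ≤ a)
    (hx : ∀ i, a * u ≤ x i) (hu : b ≤ Fintype.card ι * u) : a * b ≤ ∑ i, x i := by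
  calc a * b ≤ a * (Fintype.card ι * u) := mul_le_mul_of_nonneg_left hu ha
    _ = Fintype.card ι * (a * u) := by ring
    _ ≤ ∑ i, x i := by simpa using Finset.card_nsmul_le_sum Finset.univ x (a * u) fun i _ => hx i

variable {β : Type*} {F : Set β} {E B : β → ℝ} {σ S s s' b b' : ℝ}

lemma biSup_sqrt_mem_Icc (hE : ∀ f ∈ F, E f = B f ^ 2 + σ ^ 2 * S)
    (hB : ∀ f ∈ F, 0 ≤ B f ∧ B f ≤ b') {f₀ : β} (hf₀ : f₀ ∈ F) (hb : b ≤ B f₀) (hσ : 0 ≤ σ)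
    (hs : 0 ≤ s) (hsS : s ≤ S) (hSs' : S ≤ s') :
    (b + σ * √s) / 2 ≤ ⨆ f ∈ F, √(E f) ∧ ⨆ f ∈ F, √(E f) ≤ b' + σ * √s' := by
  have hE' : ∀ f ∈ F, √(E f) = √(B f ^ 2 + (σ * √S) ^ 2) := fun f hf => by
    rw [hE f hf, mul_pow, Real.sq_sqrt (hs.trans hsS)]
  have hsqrt : σ * √S ≤ σ * √s' := mul_le_mul_of_nonneg_left (Real.sqrt_le_sqrt hSs') hσ
  have hupper : ∀ f ∈ F, √(E f) ≤ b' + σ * √s' := fun f hf => by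
    rw [hE' f hf]
    linarith [sqrt_sq_add_sq_le_add (hB f hf).1 (by positivity : 0 ≤ σ * √S), (hB f hf).2]
  have hbdd : BddAbove (⋃ f, Set.range fun _ : f ∈ F => √(E f)) := by
    refine ⟨b' + σ * √s', ?_⟩
    rintro _ ⟨_, ⟨f, rfl⟩, ⟨hf, rfl⟩⟩
    exact hupper f hf
  have hnonneg : 0 ≤ b' + σ * √s' := by
    linarith [(hB f₀ hf₀).1, (hB f₀ hf₀).2, mul_nonneg hσ (Real.sqrt_nonneg s')]
  refine ⟨?_, Real.iSup_le (fun f => Real.iSup_le (hupper f) hnonneg) hnonneg⟩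
  refine le_trans ?_ (le_ciSup₂ (f := fun f (_ : f ∈ F) => √(E f)) hbdd f₀ hf₀)
  rw [hE' f₀ hf₀]
  have hsqrt' : σ * √s ≤ σ * √S := mul_le_mul_of_nonneg_left (Real.sqrt_le_sqrt hsS) hσ
  linarith [add_le_two_mul_sqrt_sq_add_sq (B f₀) (σ * √S)]

end Scalar

theorem noreg_two_sided_estimate_general
    (d : ℕ) (sa : ℝ)
    (c₁ C₁ c₂ C₂ c₃ C₃ : ℝ)
    (hc₁ : 0 < c₁) (hcC₁ : c₁ ≤ C₁) (hc₂ : 0 < c₂)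
    (hc₃ : 0 < c₃) (hcC₃ : c₃ ≤ C₃) :
    ∃ κ K : ℝ, 0 < κ ∧ κ ≤ K ∧
      ∀ (n : ℕ), 1 ≤ n →
      ∀ (Ω : Set (Fin d → ℝ)), MeasurableSet Ω →
      ∀ (h σ : ℝ), 0 < h → 0 < σ →
      ∀ (φ : Fin n → (Fin d → ℝ) → ℝ),
        (∀ i, MemLp (φ i) 2 (volume.restrict Ω)) →
        (∀ i, c₁ * h ^ d ≤ ((eLpNorm (φ i) 2 (volume.restrict Ω)).toReal) ^ 2) →
        (∀ i, ((eLpNorm (φ i) 2 (volume.restrict Ω)).toReal) ^ 2 ≤ C₁ * h ^ d) →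
        c₂ ≤ (n : ℝ) * h ^ d → (n : ℝ) * h ^ d ≤ C₂ →
      ∀ (F : Set ((Fin d → ℝ) → ℝ)), F.Nonempty →
        (∀ f ∈ F, MemLp f 2 (volume.restrict Ω)) →
      ∀ (coef : ((Fin d → ℝ) → ℝ) → Fin n → ℝ),
        (∀ f ∈ F, (eLpNorm (fun x => (∑ i, coef f i * φ i x) - f x) 2
            (volume.restrict Ω)).toReal ≤ C₃ * h ^ sa) →
        (∃ f₀ ∈ F, c₃ * h ^ sa ≤ (eLpNorm (fun x => (∑ i, coef f₀ i * φ i x) - f₀ x) 2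
            (volume.restrict Ω)).toReal) →
      ∀ (Ω' : Type) [MeasurableSpace Ω'] (μ : Measure Ω') [IsProbabilityMeasure μ],
      ∀ (ξ : Fin n → Ω' → ℝ),
        (∀ i, MemLp (ξ i) 2 μ) →
        iIndepFun ξ μ →
        (∀ i, ∫ ω, ξ i ω ∂μ = 0) →
        (∀ i, ∫ ω, (ξ i ω) ^ 2 ∂μ = 1) →
        κ * (σ + h ^ sa)
          ≤ (⨆ f ∈ F, Real.sqrt (∫ ω,
              ((eLpNorm (fun x => (∑ i, (coef f i + σ * ξ i ω) * φ i x) - f x) 2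
                (volume.restrict Ω)).toReal) ^ 2 ∂μ)) ∧
        (⨆ f ∈ F, Real.sqrt (∫ ω,
              ((eLpNorm (fun x => (∑ i, (coef f i + σ * ξ i ω) * φ i x) - f x) 2
                (volume.restrict Ω)).toReal) ^ 2 ∂μ))
          ≤ K * (σ + h ^ sa) := by
  have hκ : 0 < min c₃ √(c₁ * c₂) / 2 := by positivity
  refine ⟨min c₃ √(c₁ * c₂) / 2, max C₃ √(C₁ * C₂), hκ, ?_, ?_⟩
  · linarith [min_le_left c₃ √(c₁ * c₂), le_max_left C₃ √(C₁ * C₂)]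
  intro n _ Ω _ h σ hh hσ φ hφ hlo hhi hnlo hnhi F _ hF coef hbias ⟨f₀, hf₀, hwit⟩
    Ω' _ μ _ ξ hξ hindep hmean hvar
  have hS_lo := mul_le_sum_of_le hc₁.le hlo (by simpa using hnlo)
  have hS_hi := sum_le_card_mul_of_le (hc₁.le.trans hcC₁) hhi (by simpa using hnhi)
  obtain ⟨hlower, hupper⟩ := biSup_sqrt_mem_Icc
    (fun f hf => integral_sq_toReal_eLpNorm_sum_add_noise_mul_sub hφ (hF f hf) (coef f) σ
      hξ hindep hmean hvar)
    (fun f hf => ⟨ENNReal.toReal_nonneg, hbias f hf⟩) hf₀ hwit hσ.le (by positivity) hS_lo hS_hi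
  have hh_sa : 0 ≤ h ^ sa := by positivity
  constructor
  · linarith [min_mul_add_le (a := c₃) (b := √(c₁ * c₂)) hσ.le hh_sa]
  · linarith [mul_add_le_max_mul (a := C₃) (b := √(C₁ * C₂)) hσ.le hh_sa]

/-- **Two-sided estimate for the error without regularisation** (Lemma 4.1,
`e_noreg(σ,h) ∼ σ + h^{s_a}`): given the two-sided bounds `c₁ h^d ≤ ‖φᵢ‖² ≤ C₁ h^d`,
`c₂ ≤ n h^d ≤ C₂`, a uniform bias bound `‖∑ c(f)ᵢ φᵢ − f‖ ≤ C₃ h^{s_a}` on a nonempty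
class `F`, and a witness `f₀ ∈ F` with bias at least `c₃ h^{s_a}`, there are constants
`0 < κ ≤ K` depending only on `d, s_a, c₁, c₂, c₃, C₁, C₂, C₃` (not on `h, σ, n`) such
that the supremal root mean squared reconstruction error lies between `κ (σ + h^{s_a})`
and `K (σ + h^{s_a})`. -/
theorem noreg_two_sided_estimate
    (d : ℕ) (hd : 1 ≤ d) (sa : ℝ) (hsa : 0 < sa)
    (c₁ C₁ c₂ C₂ c₃ C₃ : ℝ)
    (hc₁ : 0 < c₁) (hcC₁ : c₁ ≤ C₁) (hc₂ : 0 < c₂) (hcC₂ : c₂ ≤ C₂)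
    (hc₃ : 0 < c₃) (hcC₃ : c₃ ≤ C₃) :
    ∃ κ K : ℝ, 0 < κ ∧ κ ≤ K ∧
      ∀ (n : ℕ), 1 ≤ n →
      ∀ (Ω : Set (Fin d → ℝ)), MeasurableSet Ω →
      ∀ (h σ : ℝ), 0 < h → 0 < σ →
      ∀ (φ : Fin n → (Fin d → ℝ) → ℝ),
        (∀ i, MemLp (φ i) 2 (volume.restrict Ω)) →
        (∀ i, c₁ * h ^ d ≤ ((eLpNorm (φ i) 2 (volume.restrict Ω)).toReal) ^ 2) →
        (∀ i, ((eLpNorm (φ i) 2 (volume.restrict Ω)).toReal) ^ 2 ≤ C₁ * h ^ d) →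
        c₂ ≤ (n : ℝ) * h ^ d → (n : ℝ) * h ^ d ≤ C₂ →
      ∀ (F : Set ((Fin d → ℝ) → ℝ)), F.Nonempty →
        (∀ f ∈ F, MemLp f 2 (volume.restrict Ω)) →
      ∀ (coef : ((Fin d → ℝ) → ℝ) → Fin n → ℝ),
        (∀ f ∈ F, (eLpNorm (fun x => (∑ i, coef f i * φ i x) - f x) 2
            (volume.restrict Ω)).toReal ≤ C₃ * h ^ sa) →
        (∃ f₀ ∈ F, c₃ * h ^ sa ≤ (eLpNorm (fun x => (∑ i, coef f₀ i * φ i x) - f₀ x) 2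
            (volume.restrict Ω)).toReal) →
      ∀ (Ω' : Type) [MeasurableSpace Ω'] (μ : Measure Ω') [IsProbabilityMeasure μ],
      ∀ (ξ : Fin n → Ω' → ℝ),
        (∀ i, MemLp (ξ i) 2 μ) →
        iIndepFun ξ μ →
        (∀ i, ∫ ω, ξ i ω ∂μ = 0) →
        (∀ i, ∫ ω, (ξ i ω) ^ 2 ∂μ = 1) →
        κ * (σ + h ^ sa)
          ≤ (⨆ f ∈ F, Real.sqrt (∫ ω,
              ((eLpNorm (fun x => (∑ i, (coef f i + σ * ξ i ω) * φ i x) - f x) 2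
                (volume.restrict Ω)).toReal) ^ 2 ∂μ)) ∧
        (⨆ f ∈ F, Real.sqrt (∫ ω,
              ((eLpNorm (fun x => (∑ i, (coef f i + σ * ξ i ω) * φ i x) - f x) 2
                (volume.restrict Ω)).toReal) ^ 2 ∂μ))
          ≤ K * (σ + h ^ sa) :=
  noreg_two_sided_estimate_general d sa c₁ C₁ c₂ C₂ c₃ C₃ hc₁ hcC₁ hc₂ hc₃ hcC₃
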